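/- arXiv:2205.04499 — 4 statements merged into one kernel-verified Lean document; each statement's English description precedes it below -/
import Mathlib

section
/- Let Γ be a finite group, k an algebraically closed field, σ an automorphism of Γ of order ℓ (a prime, invertible in k or not—no assumption needed), and V an irreducible k-linear representation of Γ such that V is isomorphic to V ∘ σ as a Γ-representation. Then there exists an extension of the Γ-action on V to an action of the semidirect product Γ ⋊ ⟨σ⟩, and any two such extensions differ by a character of ⟨σ⟩; in particular if k contains no nontrivial ℓ-th roots of unity other than those making ℓ-th roots unique (e.g. if x ↦ x^ℓ is bijective on k^×), the extension is unique. -/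
/-!
If `A` intertwines `ρ` with `ρ ∘ σ`, then `A ^ ℓ` commutes with `ρ` because `σ ^ ℓ = 1`, so by
Schur's lemma it is a nonzero scalar `λ`; dividing `A` by an `ℓ`-th root of `λ` gives `A ^ ℓ = 1`.
For two such `A` and `B`, `A⁻¹ B` commutes with `ρ`, hence is a scalar `c`, and comparing
`ℓ`-th powers gives `c ^ ℓ = 1`.
-/

theorem pow_eq_one_of_smul_pow_eq_one {k R : Type*} [Field k] [Ring R] [Nontrivial R]
    [Algebra k R] {n : ℕ} {c : k} {a : R} (ha : a ^ n = 1) (hca : (c • a) ^ n = 1) :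
    c ^ n = 1 := by
  rw [smul_pow, ha, ← Algebra.algebraMap_eq_smul_one] at hca
  exact (algebraMap k R).injective (hca.trans (map_one _).symm)

theorem eq_one_of_pow_eq_one_of_pow_injective {M : Type*} [Monoid M] {n : ℕ} (hn : n ≠ 0)
    (hinj : Function.Injective fun u : Mˣ => u ^ n) {c : M} (hc : c ^ n = 1) : c = 1 := by
  obtain ⟨u, rfl⟩ := IsUnit.of_pow_eq_one hc hn
  have hu : u ^ n = 1 ^ n := by ext; simpa using hc
  simp [hinj hu]

namespace Representation

variable {k G V : Type*} [Field k] [Monoid G] [AddCommGroup V] [Module k V]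
  {ρ : Representation k G V}

theorem isIrreducible_of_forall_map_le [Nontrivial V]
    (hirr : ∀ p : Submodule k V, (∀ g : G, p.map (ρ g) ≤ p) → p = ⊥ ∨ p = ⊤) :
    ρ.IsIrreducible where
  exists_pair_ne := ⟨⊥, ⊤, fun h => bot_ne_top (congrArg Subrepresentation.toSubmodule h)⟩
  eq_bot_or_eq_top W :=
    (hirr W.toSubmodule fun g =>
      Submodule.map_le_iff_le_comap.2 fun _ hv => W.apply_mem_toSubmodule g hv).imp
      Subrepresentation.ext Subrepresentation.ext

theorem exists_eq_smul_one_of_commute [IsAlgClosed k] [FiniteDimensional k V] [ρ.IsIrreducible]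
    {f : V →ₗ[k] V} (hf : ∀ g, f ∘ₗ ρ g = ρ g ∘ₗ f) : ∃ c : k, f = c • 1 := by
  obtain ⟨c, hc⟩ := IsIrreducible.algebraMap_intertwiningMap_bijective_of_isAlgClosed.2 ⟨f, hf⟩
  exact ⟨c, congrArg IntertwiningMap.toLinearMap hc.symm⟩

variable (ρ) in
/-- When `σ ^ n = 1`, extensions of `ρ` to `G ⋊ ⟨σ⟩` are the `A` with this property and
`A ^ n = 1`. -/
def IsTwistedIntertwiner (σ : MulAut G) (A : V →ₗ[k] V) : Prop :=
  ∀ g, A ∘ₗ ρ g = ρ (σ g) ∘ₗ A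

namespace IsTwistedIntertwiner

variable {σ τ : MulAut G} {A B : V →ₗ[k] V}

theorem comp (hA : ρ.IsTwistedIntertwiner σ A) (hB : ρ.IsTwistedIntertwiner τ B) :
    ρ.IsTwistedIntertwiner (τ * σ) (B * A) := fun g => by
  rw [Module.End.mul_eq_comp, LinearMap.comp_assoc, hA, ← LinearMap.comp_assoc, hB,
    LinearMap.comp_assoc]
  rfl

theorem pow (hA : ρ.IsTwistedIntertwiner σ A) (n : ℕ) :
    ρ.IsTwistedIntertwiner (σ ^ n) (A ^ n) := by
  induction n with
  | zero => intro g; rfl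
  | succ n ih => rw [pow_succ', pow_succ']; exact ih.comp hA

theorem smul (hA : ρ.IsTwistedIntertwiner σ A) (c : k) : ρ.IsTwistedIntertwiner σ (c • A) :=
  fun g => by rw [LinearMap.smul_comp, hA g, LinearMap.comp_smul]

theorem units_inv {u : (V →ₗ[k] V)ˣ} (hu : ρ.IsTwistedIntertwiner σ u) :
    ρ.IsTwistedIntertwiner σ⁻¹ ↑u⁻¹ := fun g => by
  have h := hu (σ⁻¹ g)
  rw [MulAut.apply_inv_self] at h
  change ↑u⁻¹ * ρ g = ρ (σ⁻¹ g) * ↑u⁻¹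
  rw [Units.inv_mul_eq_iff_eq_mul, ← mul_assoc, Units.eq_mul_inv_iff_mul_eq]
  exact h.symm

end IsTwistedIntertwiner

variable [IsAlgClosed k] [FiniteDimensional k V] [ρ.IsIrreducible] {σ : MulAut G}

theorem IsTwistedIntertwiner.exists_eq_smul {A B : V →ₗ[k] V} (hA : ρ.IsTwistedIntertwiner σ A)
    (hA_unit : IsUnit A) (hB : ρ.IsTwistedIntertwiner σ B) : ∃ c : k, B = c • A := by
  obtain ⟨u, rfl⟩ := hA_unit
  have hcomm := hA.units_inv.comp hB
  rw [mul_inv_cancel] at hcomm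
  obtain ⟨c, hc⟩ := exists_eq_smul_one_of_commute hcomm
  refine ⟨c, ?_⟩
  rw [← smul_one_mul, ← hc, mul_assoc, Units.inv_mul, mul_one]

theorem IsTwistedIntertwiner.exists_pow_eq_one [Nontrivial V] {n : ℕ} (hn : n ≠ 0)
    (hσ : σ ^ n = 1) {E : V →ₗ[k] V} (hE : ρ.IsTwistedIntertwiner σ E) (hE_unit : IsUnit E) :
    ∃ A, ρ.IsTwistedIntertwiner σ A ∧ A ^ n = 1 := by
  have hcomm := hE.pow n
  rw [hσ] at hcomm
  obtain ⟨c, hc⟩ := exists_eq_smul_one_of_commute hcomm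
  have hc0 : c ≠ 0 := by
    rintro rfl
    exact (hE_unit.pow n).ne_zero (hc.trans (zero_smul k 1))
  obtain ⟨μ, rfl⟩ := IsAlgClosed.exists_pow_nat_eq c (Nat.pos_of_ne_zero hn)
  refine ⟨μ⁻¹ • E, hE.smul _, ?_⟩
  rw [smul_pow, hc, smul_smul, inv_pow, inv_mul_cancel₀ hc0, one_smul]

end Representation

theorem extension_to_semidirect_product_general
    (ℓ : ℕ) (hℓ : ℓ.Prime)
    (k : Type*) [Field k] [IsAlgClosed k]
    (Γ : Type*) [Group Γ]
    (σ : MulAut Γ) (hσ : σ ^ ℓ = 1)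
    (V : Type*) [AddCommGroup V] [Module k V] [FiniteDimensional k V] [Nontrivial V]
    (ρ : Representation k Γ V)
    (hirr : ∀ p : Submodule k V, (∀ g : Γ, p.map (ρ g) ≤ p) → p = ⊥ ∨ p = ⊤)
    (hiso : ∃ e : V ≃ₗ[k] V,
      ∀ g : Γ, (e : V →ₗ[k] V) ∘ₗ ρ g = ρ (σ g) ∘ₗ (e : V →ₗ[k] V)) :
    (∃ A : V →ₗ[k] V, (∀ g : Γ, A ∘ₗ ρ g = ρ (σ g) ∘ₗ A) ∧ A ^ ℓ = 1) ∧
    (∀ A B : V →ₗ[k] V,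
      ((∀ g : Γ, A ∘ₗ ρ g = ρ (σ g) ∘ₗ A) ∧ A ^ ℓ = 1) →
      ((∀ g : Γ, B ∘ₗ ρ g = ρ (σ g) ∘ₗ B) ∧ B ^ ℓ = 1) →
      ∃ c : k, c ^ ℓ = 1 ∧ B = c • A) ∧
    (Function.Bijective (fun c : kˣ => c ^ ℓ) →
      ∀ A B : V →ₗ[k] V,
      ((∀ g : Γ, A ∘ₗ ρ g = ρ (σ g) ∘ₗ A) ∧ A ^ ℓ = 1) →
      ((∀ g : Γ, B ∘ₗ ρ g = ρ (σ g) ∘ₗ B) ∧ B ^ ℓ = 1) →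
      A = B) := by
  have : ρ.IsIrreducible := Representation.isIrreducible_of_forall_map_le hirr
  obtain ⟨e, he⟩ := hiso
  have unique_up_to_root : ∀ A B : V →ₗ[k] V,
      (ρ.IsTwistedIntertwiner σ A ∧ A ^ ℓ = 1) → (ρ.IsTwistedIntertwiner σ B ∧ B ^ ℓ = 1) →
      ∃ c : k, c ^ ℓ = 1 ∧ B = c • A := by
    rintro A B ⟨hA, hAℓ⟩ ⟨hB, hBℓ⟩
    obtain ⟨c, rfl⟩ := hA.exists_eq_smul (IsUnit.of_pow_eq_one hAℓ hℓ.ne_zero) hB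
    exact ⟨c, pow_eq_one_of_smul_pow_eq_one hAℓ hBℓ, rfl⟩
  refine ⟨Representation.IsTwistedIntertwiner.exists_pow_eq_one hℓ.ne_zero hσ he
    ((Module.End.isUnit_iff _).2 e.bijective), unique_up_to_root, fun hbij A B hA hB => ?_⟩
  obtain ⟨c, hc, rfl⟩ := unique_up_to_root A B hA hB
  rw [eq_one_of_pow_eq_one_of_pow_injective hℓ.ne_zero hbij.injective hc, one_smul]

/-- Let `Γ` be a finite group, `k` an algebraically closed field, `σ` an automorphism of `Γ`
of order `ℓ` (a prime), and `V` an irreducible `k`-linear representation `ρ` of `Γ` with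
`V ≅ V ∘ σ`. An extension of the action to `Γ ⋊ ⟨σ⟩` amounts to an endomorphism `A` with
`A ρ(g) = ρ(σ g) A` and `A^ℓ = 1`. Then: such an extension exists; any two extensions differ
by a character of `⟨σ⟩`, i.e. by a scalar `c` with `c^ℓ = 1`; and if `x ↦ x^ℓ` is bijective
on `k^×`, the extension is unique. -/
theorem extension_to_semidirect_product
    (ℓ : ℕ) (hℓ : ℓ.Prime)
    (k : Type*) [Field k] [IsAlgClosed k]
    (Γ : Type*) [Group Γ] [Finite Γ]
    (σ : MulAut Γ) (hσ : σ ^ ℓ = 1)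
    (V : Type*) [AddCommGroup V] [Module k V] [FiniteDimensional k V] [Nontrivial V]
    (ρ : Representation k Γ V)
    (hirr : ∀ p : Submodule k V, (∀ g : Γ, p.map (ρ g) ≤ p) → p = ⊥ ∨ p = ⊤)
    (hiso : ∃ e : V ≃ₗ[k] V,
      ∀ g : Γ, (e : V →ₗ[k] V) ∘ₗ ρ g = ρ (σ g) ∘ₗ (e : V →ₗ[k] V)) :
    (∃ A : V →ₗ[k] V, (∀ g : Γ, A ∘ₗ ρ g = ρ (σ g) ∘ₗ A) ∧ A ^ ℓ = 1) ∧
    (∀ A B : V →ₗ[k] V,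
      ((∀ g : Γ, A ∘ₗ ρ g = ρ (σ g) ∘ₗ A) ∧ A ^ ℓ = 1) →
      ((∀ g : Γ, B ∘ₗ ρ g = ρ (σ g) ∘ₗ B) ∧ B ^ ℓ = 1) →
      ∃ c : k, c ^ ℓ = 1 ∧ B = c • A) ∧
    (Function.Bijective (fun c : kˣ => c ^ ℓ) →
      ∀ A B : V →ₗ[k] V,
      ((∀ g : Γ, A ∘ₗ ρ g = ρ (σ g) ∘ₗ A) ∧ A ^ ℓ = 1) →
      ((∀ g : Γ, B ∘ₗ ρ g = ρ (σ g) ∘ₗ B) ∧ B ^ ℓ = 1) →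
      A = B) :=
  extension_to_semidirect_product_general ℓ hℓ k Γ σ hσ V ρ hirr hiso
end

section
/- Let ℓ > n be a prime, E/ℚ_ℓ a finite extension with ring of integers O_E, uniformizer ϖ, residue field k_E. Let L be a free O_E-module of rank n with a decomposition L = ⊕_{i∈ℤ} L_i (almost all zero), and let N : L → L be an O_E-linear nilpotent endomorphism with N(L_i) ⊆ L_{i-2} such that for each k ≥ 0, N^k restricts to an isomorphism L_k → L_{-k} over E (i.e. after inverting ϖ). Suppose that the mod-ϖ reduction N̄ satisfies Jord(N̄) = Jord(N), i.e. dim_E ker(N^k ⊗ E) = dim_{k_E} ker(N̄^k) for all k ≥ 0. Then for each k ≥ 0 the reduction N̄^k restricts to an isomorphism L̄_k → L̄_{-k}, where L̄_i = L_i ⊗ k_E. -/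
/-! Over the principal ideal domain `R` the kernel of `N ^ j` is a direct summand of `L` (its
cokernel embeds in the free module `L`), so its rank survives every base change to a field. By
flatness `ker (N_K ^ j)` is the base change of `ker (N ^ j)` to `K`, and the Jordan type
equality then forces `ker (N̄ ^ j)` to be its base change to the residue field `k`. Since `N ^ j`
is injective on `L_j` (already over `R`, as `L` embeds in `K ⊗ L`) and commutes with the graded
projections, `ker (N ^ j)` lies in the kernel of the projection onto `L_j`; this survives
reduction, so `N̄ ^ j` is injective on `L̄_j`. Surjectivity onto `L̄_{-j}` is then a count of
dimensions, since the graded pieces have the same dimensions over `K` and over `k`. -/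

open TensorProduct LinearMap Module

section BaseChange

variable {R : Type*} [CommRing R] {L L' : Type*} [AddCommGroup L] [Module R L]
  [AddCommGroup L'] [Module R L'] (A : Type*) [CommRing A] [Algebra R A]

theorem TensorProduct.mk_one_injective_of_flat [Module.Flat R L]
    (hA : Function.Injective (algebraMap R A)) : Function.Injective (mk R A L 1) := by
  convert (Module.Flat.rTensor_preserves_injective_linearMap (M := L) (Algebra.linearMap R A)
    hA).comp (TensorProduct.lid R L).symm.injective
  ext
  simp

theorem Submodule.disjoint_of_disjoint_baseChange
    (hA : Function.Injective (TensorProduct.mk R A L 1)) {p q : Submodule R L}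
    (h : Disjoint (p.baseChange A) (q.baseChange A)) : Disjoint p q := by
  rw [Submodule.disjoint_def] at h ⊢
  intro x hp hq
  apply hA
  rw [map_zero]
  exact h _ (Submodule.tmul_mem_baseChange_of_mem 1 hp) (Submodule.tmul_mem_baseChange_of_mem 1 hq)

theorem Submodule.baseChange_map (f : L →ₗ[R] L') (p : Submodule R L) :
    (p.map f).baseChange A = (p.baseChange A).map (f.baseChange A) := by
  rw [← p.span_eq, ← Submodule.span_image, Submodule.baseChange_span, Submodule.baseChange_span,
    Submodule.map_span, Set.image_image, Set.image_image]
  rfl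

theorem LinearMap.baseChange_ker_le (f : L →ₗ[R] L') :
    (ker f).baseChange A ≤ ker (f.baseChange A) := by
  rintro _ ⟨y, rfl⟩
  rw [mem_ker, ← comp_apply, ← baseChange_comp, comp_ker_subtype, baseChange_zero, zero_apply]

theorem LinearMap.ker_baseChange [Module.Flat R A] (f : L →ₗ[R] L') :
    ker (f.baseChange A) = (ker f).baseChange A :=
  Module.Flat.ker_lTensor_eq A A f

theorem LinearMap.IsProj.baseChange {p : Submodule R L} {π : L →ₗ[R] L} (h : IsProj p π) :
    IsProj (p.baseChange A) (π.baseChange A) where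
  map_mem x := by
    rw [← h.subtype_comp_codRestrict, baseChange_comp]
    exact ⟨_, rfl⟩
  map_id := by
    rintro _ ⟨y, rfl⟩
    rw [← comp_apply, ← baseChange_comp, show π ∘ₗ p.subtype = p.subtype from
      LinearMap.ext fun x => h.map_id x x.2]

theorem LinearMap.IsProj.finrank_baseChange [Nontrivial R] (F : Type*) [Field F] [Algebra R F]
    {p : Submodule R L} [Module.Free R p] [Module.Finite R p] {π : L →ₗ[R] L}
    (h : IsProj p π) : finrank F (p.baseChange F) = finrank R p := by
  have hinj : Function.Injective (p.subtype.baseChange F) :=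
    injective_of_comp_eq_id _ (h.codRestrict.baseChange F) <| by
      rw [← baseChange_comp, show h.codRestrict ∘ₗ p.subtype = LinearMap.id from
        LinearMap.ext h.codRestrict_apply_cod, baseChange_id]
  rw [Submodule.baseChange, finrank_range_of_inj hinj, Module.finrank_baseChange]

end BaseChange

theorem LinearMap.exists_isProj_ker {R L L' : Type*} [Ring R] [AddCommGroup L] [Module R L]
    [AddCommGroup L'] [Module R L'] (f : L →ₗ[R] L') [Module.Projective R (range f)] :
    ∃ π : L →ₗ[R] L, IsProj (ker f) π := by
  obtain ⟨s, hs⟩ := f.rangeRestrict.exists_rightInverse_of_surjective (range_rangeRestrict f)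
  have hfs (y : range f) : f (s y) = y := congrArg Subtype.val (LinearMap.congr_fun hs y)
  refine ⟨LinearMap.id - s ∘ₗ f.rangeRestrict, fun x => ?_, fun x hx => ?_⟩
  · simp [hfs]
  · simp [show f.rangeRestrict x = 0 from Subtype.ext (mem_ker.1 hx)]

theorem Submodule.finrank_map_of_disjoint_ker {R M M' : Type*} [Ring R] [AddCommGroup M]
    [Module R M] [AddCommGroup M'] [Module R M'] {f : M →ₗ[R] M'} {p : Submodule R M}
    (h : Disjoint p (ker f)) : finrank R (p.map f) = finrank R p := by
  have hinj : Function.Injective (f.domRestrict p) := by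
    rw [← ker_eq_bot, eq_bot_iff]
    exact fun x hx => Subtype.ext (disjoint_ker.1 h x x.2 hx)
  rw [← range_domRestrict]
  exact (LinearEquiv.ofInjective _ hinj).finrank_eq.symm

theorem LinearMap.ker_baseChange_eq_of_finrank_ker_eq {R L L' : Type*} [CommRing R] [IsDomain R]
    [IsPrincipalIdealRing R] [AddCommGroup L] [Module R L] [Module.Free R L] [Module.Finite R L]
    [AddCommGroup L'] [Module R L'] [Module.Free R L']
    {K k : Type*} [Field K] [Algebra R K] [Module.Flat R K] [Field k] [Algebra R k]
    (f : L →ₗ[R] L')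
    (h : finrank K (ker (f.baseChange K)) = finrank k (ker (f.baseChange k))) :
    ker (f.baseChange k) = (ker f).baseChange k := by
  obtain ⟨π, hπ⟩ := f.exists_isProj_ker
  refine (Submodule.eq_of_le_of_finrank_le (baseChange_ker_le k f) ?_).symm
  rw [← h, ker_baseChange, hπ.finrank_baseChange K, hπ.finrank_baseChange k]

theorem Submodule.map_pow_le_of_map_le {R L ι : Type*} [Semiring R] [AddCommMonoid L] [Module R L]
    [AddMonoid ι] {M : ι → Submodule R L} {f : L →ₗ[R] L} {d : ι}
    (hf : ∀ i, (M i).map f ≤ M (i + d)) (m : ℕ) (i : ι) : (M i).map (f ^ m) ≤ M (i + m • d) := by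
  induction m generalizing i with
  | zero => simp [Module.End.one_eq_id]
  | succ m ih =>
    rw [pow_succ, Module.End.mul_eq_comp, Submodule.map_comp, succ_nsmul', ← add_assoc]
    exact (Submodule.map_mono (hf i)).trans (ih (i + d))

namespace DirectSum.IsInternal

section Ring

variable {R L ι : Type*} [Ring R] [AddCommGroup L] [Module R L] [DecidableEq ι]
  {M : ι → Submodule R L} (h : IsInternal M)

noncomputable def proj (i : ι) : L →ₗ[R] L :=
  (M i).subtype ∘ₗ component R ι (fun i => M i) i ∘ₗ
    (LinearEquiv.ofBijective (coeLinearMap M) h).symm.toLinearMap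

theorem isProj_proj (i : ι) : IsProj (M i) (h.proj i) where
  map_mem x := ((LinearEquiv.ofBijective (coeLinearMap M) h).symm x i).2
  map_id _ hx := congrArg Subtype.val (h.ofBijective_coeLinearMap_of_mem hx)

theorem proj_apply_of_mem_of_ne {i i' : ι} (hne : i' ≠ i) {x : L} (hx : x ∈ M i') :
    h.proj i x = 0 :=
  congrArg Subtype.val (h.ofBijective_coeLinearMap_of_mem_ne hne hx)

theorem proj_comp_of_map_le {σ : ι → ι} (hσ : Function.Injective σ) {f : L →ₗ[R] L}
    (hf : ∀ i, (M i).map f ≤ M (σ i)) (i : ι) : h.proj (σ i) ∘ₗ f = f ∘ₗ h.proj i := by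
  refine ext_on (s := ⋃ i, (M i : Set L))
    (by rw [← Submodule.iSup_eq_span, h.submodule_iSup_eq_top]) fun x hx => ?_
  obtain ⟨i', hx⟩ := Set.mem_iUnion.1 hx
  have hfx : f x ∈ M (σ i') := hf i' ⟨x, hx, rfl⟩
  by_cases hi : i' = i
  · subst hi
    simp [(h.isProj_proj _).map_id _ hx, (h.isProj_proj _).map_id _ hfx]
  · simp [h.proj_apply_of_mem_of_ne hi hx, h.proj_apply_of_mem_of_ne (hσ.ne hi) hfx]

theorem ker_le_ker_proj {σ : ι → ι} (hσ : Function.Injective σ) {f : L →ₗ[R] L}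
    (hf : ∀ i, (M i).map f ≤ M (σ i)) {i : ι} (hi : Disjoint (M i) (ker f)) :
    ker f ≤ ker (h.proj i) := by
  intro x hx
  refine disjoint_ker.1 hi _ ((h.isProj_proj i).map_mem x) ?_
  rw [← comp_apply, ← h.proj_comp_of_map_le hσ hf, comp_apply, mem_ker.1 hx, map_zero]

end Ring

section CommRing

variable {R L ι : Type*} [CommRing R] [AddCommGroup L] [Module R L] [DecidableEq ι]
  {M : ι → Submodule R L}

theorem disjoint_baseChange_ker (h : IsInternal M) (A : Type*) [CommRing A] [Algebra R A]
    {σ : ι → ι} (hσ : Function.Injective σ) {f : L →ₗ[R] L} (hf : ∀ i, (M i).map f ≤ M (σ i))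
    {i : ι} (hi : Disjoint (M i) (ker f)) : Disjoint ((M i).baseChange A) ((ker f).baseChange A) :=
  ((h.isProj_proj i).baseChange A).isCompl.disjoint.mono_right <|
    (Submodule.baseChange_mono A (h.ker_le_ker_proj hσ hf hi)).trans (baseChange_ker_le A _)

theorem finrank_baseChange [IsDomain R] [IsPrincipalIdealRing R] [Module.Finite R L]
    [Module.Free R L] (h : IsInternal M) {F : Type*} [Field F] [Algebra R F] (i : ι) :
    finrank F ((M i).baseChange F) = finrank R (M i) :=
  (h.isProj_proj i).finrank_baseChange F

end CommRing

end DirectSum.IsInternal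

theorem graded_iso_mod_p_of_jordan_type_equality_general
    (R : Type*) [CommRing R] [IsDomain R] [IsDiscreteValuationRing R]
    (L : Type*) [AddCommGroup L] [Module R L] [Module.Free R L] [Module.Finite R L]
    (M : ℤ → Submodule R L) (hdirect : DirectSum.IsInternal M)
    (N : L →ₗ[R] L)
    (hNM : ∀ i : ℤ, (M i).map N ≤ M (i - 2))
    (K : Type*) [Field K] [Algebra R K] [IsFractionRing R K]
    (hbijK : ∀ j : ℕ,
      Submodule.map ((N.baseChange K) ^ j) ((M (j : ℤ)).baseChange K) =
          (M (-(j : ℤ))).baseChange K ∧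
        ∀ x ∈ (M (j : ℤ)).baseChange K, ((N.baseChange K) ^ j) x = 0 → x = 0)
    (hjord : ∀ j : ℕ,
      Module.finrank K (LinearMap.ker ((N.baseChange K) ^ j)) =
        Module.finrank (IsLocalRing.ResidueField R)
          (LinearMap.ker ((N.baseChange (IsLocalRing.ResidueField R)) ^ j))) :
    ∀ j : ℕ,
      Submodule.map ((N.baseChange (IsLocalRing.ResidueField R)) ^ j)
          ((M (j : ℤ)).baseChange (IsLocalRing.ResidueField R)) =
        (M (-(j : ℤ))).baseChange (IsLocalRing.ResidueField R) ∧
      ∀ x ∈ (M (j : ℤ)).baseChange (IsLocalRing.ResidueField R),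
        ((N.baseChange (IsLocalRing.ResidueField R)) ^ j) x = 0 → x = 0 := by
  intro j
  have : Module.Flat R K := IsLocalization.flat K (nonZeroDivisors R)
  obtain ⟨hmapK, hinjK⟩ := hbijK j
  have hdimker := hjord j
  rw [← baseChange_pow, ← baseChange_pow] at hdimker
  simp only [← baseChange_pow, ← disjoint_ker] at hmapK hinjK ⊢
  have hshift : ∀ i : ℤ, (M i).map (N ^ j) ≤ M (i + j • (-2)) :=
    Submodule.map_pow_le_of_map_le (fun i => by simpa only [← sub_eq_add_neg] using hNM i) j
  have hσ : Function.Injective (· + j • (-2 : ℤ)) := add_left_injective _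
  have hdisjR : Disjoint (M j) (ker (N ^ j)) :=
    Submodule.disjoint_of_disjoint_baseChange K
      (mk_one_injective_of_flat K (IsFractionRing.injective R K))
      (ker_baseChange K (N ^ j) ▸ hinjK)
  have hdisjk := ker_baseChange_eq_of_finrank_ker_eq (N ^ j) hdimker ▸
    hdirect.disjoint_baseChange_ker (IsLocalRing.ResidueField R) hσ hshift hdisjR
  refine ⟨Submodule.eq_of_le_of_finrank_le ?_ (le_of_eq ?_), hdisjk⟩
  · rw [← Submodule.baseChange_map]
    exact Submodule.baseChange_mono _ ((hshift j).trans_eq (by rw [nsmul_eq_mul]; ring_nf))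
  · calc _ = finrank K ((M (-j)).baseChange K) := by
          rw [hdirect.finrank_baseChange, hdirect.finrank_baseChange]
      _ = finrank K ((M j).baseChange K) := by
          rw [← hmapK, Submodule.finrank_map_of_disjoint_ker hinjK]
      _ = _ := by rw [hdirect.finrank_baseChange, hdirect.finrank_baseChange]
      _ = _ := (Submodule.finrank_map_of_disjoint_ker hdisjk).symm

/-- Let `ℓ > n` be a prime, `O` (the ring of integers of a finite extension `E/ℚ_ℓ`) a
complete DVR with residue field `k_E` of characteristic `ℓ`, fraction field `K = E`.
Let `L` be a free `O`-module of rank `n` with a grading `L = ⊕_{i∈ℤ} L_i` and a nilpotent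
endomorphism `N` with `N(L_i) ⊆ L_{i-2}`, such that for each `j ≥ 0` the map `N^j` restricts
to an isomorphism `L_j → L_{-j}` after base change to `K`. If the mod-`ϖ` reduction `N̄`
satisfies `Jord(N̄) = Jord(N)` (i.e. `dim_K ker((N ⊗ K)^j) = dim_{k_E} ker(N̄^j)` for all
`j`), then for each `j ≥ 0` the reduction `N̄^j` restricts to an isomorphism
`L̄_j → L̄_{-j}`. -/
theorem graded_iso_mod_p_of_jordan_type_equality
    (ℓ n : ℕ) [Fact ℓ.Prime] (hn : n < ℓ)
    (R : Type*) [CommRing R] [IsDomain R] [IsDiscreteValuationRing R]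
    [IsAdicComplete (IsLocalRing.maximalIdeal R) R]
    [CharP (IsLocalRing.ResidueField R) ℓ]
    (L : Type*) [AddCommGroup L] [Module R L] [Module.Free R L] [Module.Finite R L]
    (hrank : Module.finrank R L = n)
    (M : ℤ → Submodule R L) (hdirect : DirectSum.IsInternal M)
    (N : L →ₗ[R] L) (hnil : IsNilpotent N)
    (hNM : ∀ i : ℤ, (M i).map N ≤ M (i - 2))
    (K : Type*) [Field K] [Algebra R K] [IsFractionRing R K]
    (hbijK : ∀ j : ℕ,
      Submodule.map ((N.baseChange K) ^ j) ((M (j : ℤ)).baseChange K) =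
          (M (-(j : ℤ))).baseChange K ∧
        ∀ x ∈ (M (j : ℤ)).baseChange K, ((N.baseChange K) ^ j) x = 0 → x = 0)
    (hjord : ∀ j : ℕ,
      Module.finrank K (LinearMap.ker ((N.baseChange K) ^ j)) =
        Module.finrank (IsLocalRing.ResidueField R)
          (LinearMap.ker ((N.baseChange (IsLocalRing.ResidueField R)) ^ j))) :
    ∀ j : ℕ,
      Submodule.map ((N.baseChange (IsLocalRing.ResidueField R)) ^ j)
          ((M (j : ℤ)).baseChange (IsLocalRing.ResidueField R)) =
        (M (-(j : ℤ))).baseChange (IsLocalRing.ResidueField R) ∧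
      ∀ x ∈ (M (j : ℤ)).baseChange (IsLocalRing.ResidueField R),
        ((N.baseChange (IsLocalRing.ResidueField R)) ^ j) x = 0 → x = 0 :=
  graded_iso_mod_p_of_jordan_type_equality_general R L M hdirect N hNM K hbijK hjord
end

section
/- Let k be a field, L̄ a finite-dimensional k-vector space with a grading L̄ = ⊕_{i∈ℤ} L̄_i and a nilpotent endomorphism N̄ with N̄(L̄_i) ⊆ L̄_{i-2} such that for each k ≥ 0, N̄^k : L̄_k → L̄_{-k} is an isomorphism. Then any linear map F : L̄ → L̄ that commutes with N̄ and satisfies F(L̄_i) ⊆ L̄_{i+2} for all i is zero. -/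
/-!
`F` kills `M j` for `j` large because `N` is nilpotent and `N ^ j` is injective on `M j`.
Descending by two: for `x ∈ M j`, `N ^ (j+1) x ∈ M (-j-2)` is `N ^ (j+2) y` with `y ∈ M (j+2)`,
so `x = N y + z` with `z ∈ M j` primitive. Then `F (N y) = N (F y)` vanishes by induction, and
`F z ∈ M (j+2)` satisfies `N ^ (j+2) (F z) = N (F (N ^ (j+1) z)) = 0`, hence vanishes by
injectivity. Negative degrees are images `N ^ j (M j)`, which `F` kills since it commutes with `N`.
-/

lemma Nat.forall_of_forall_ge_of_imp_add_two {P : ℕ → Prop} {e : ℕ}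
    (hge : ∀ j, e ≤ j → P j) (hstep : ∀ j, P (j + 2) → P j) (j : ℕ) : P j := by
  have key : ∀ t j, e ≤ j + t → P j := by
    intro t
    induction t with
    | zero => exact fun j hj => hge j (by omega)
    | succ t ih => exact fun j hj => hstep j (ih (j + 2) (by omega))
  exact key e j (by omega)

lemma Submodule.eq_bot_of_pow_eq_zero_of_le {R V : Type*} [Semiring R] [AddCommMonoid V]
    [Module R V] {N : Module.End R V} {P : Submodule R V} {e n : ℕ}
    (hinj : ∀ x ∈ P, (N ^ n) x = 0 → x = 0) (he : N ^ e = 0) (hn : e ≤ n) : P = ⊥ :=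
  (P.eq_bot_iff).2 fun x hx => hinj x hx (by rw [pow_eq_zero_of_le hn he, LinearMap.zero_apply])

namespace LefschetzGrading

variable {R V : Type*} [Ring R] [AddCommGroup V] [Module R V]
  {M : ℤ → Submodule R V} {N F : Module.End R V}

lemma pow_apply_mem (hNM : ∀ i : ℤ, (M i).map N ≤ M (i - 2)) (s : ℕ) {i : ℤ} {x : V}
    (hx : x ∈ M i) : (N ^ s) x ∈ M (i - 2 * s) := by
  induction s with
  | zero => simpa using hx
  | succ s ih =>
    rw [pow_succ', Module.End.mul_apply]
    convert hNM _ (Submodule.mem_map_of_mem ih) using 2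
    push_cast
    ring

lemma exists_pow_succ_apply_sub_eq_zero (hNM : ∀ i : ℤ, (M i).map N ≤ M (i - 2)) {j : ℕ}
    (hsurj : (M ((j + 2 : ℕ) : ℤ)).map (N ^ (j + 2)) = M (-((j + 2 : ℕ) : ℤ)))
    {x : V} (hx : x ∈ M j) : ∃ y ∈ M ((j + 2 : ℕ) : ℤ), (N ^ (j + 1)) (x - N y) = 0 := by
  have hlow : (N ^ (j + 1)) x ∈ M (-((j + 2 : ℕ) : ℤ)) := by
    convert pow_apply_mem hNM (j + 1) hx using 2
    push_cast
    ring
  rw [← hsurj] at hlow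
  obtain ⟨y, hy, hyx⟩ := hlow
  refine ⟨y, hy, ?_⟩
  rw [map_sub, ← Module.End.mul_apply, ← pow_succ, hyx, sub_self]

lemma apply_eq_zero_of_pow_succ_apply_eq_zero (hFN : Commute F N)
    (hFM : ∀ i : ℤ, (M i).map F ≤ M (i + 2)) {j : ℕ}
    (hinj : ∀ x ∈ M ((j + 2 : ℕ) : ℤ), (N ^ (j + 2)) x = 0 → x = 0)
    {z : V} (hz : z ∈ M j) (hprim : (N ^ (j + 1)) z = 0) : F z = 0 := by
  refine hinj _ ?_ ?_
  · convert hFM _ (Submodule.mem_map_of_mem hz) using 2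
    push_cast
    ring
  · rw [pow_succ', Module.End.mul_apply, ← Module.End.mul_apply (N ^ (j + 1)),
      ← (hFN.pow_right (j + 1)).eq, Module.End.mul_apply, hprim, map_zero, map_zero]

lemma apply_eq_zero_of_forall_mem_add_two (hNM : ∀ i : ℤ, (M i).map N ≤ M (i - 2))
    (hFN : Commute F N) (hFM : ∀ i : ℤ, (M i).map F ≤ M (i + 2)) {j : ℕ}
    (hbij : Submodule.map (N ^ (j + 2)) (M ((j + 2 : ℕ) : ℤ)) = M (-((j + 2 : ℕ) : ℤ)) ∧
      ∀ x ∈ M ((j + 2 : ℕ) : ℤ), (N ^ (j + 2)) x = 0 → x = 0)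
    (hnext : ∀ y ∈ M ((j + 2 : ℕ) : ℤ), F y = 0) {x : V} (hx : x ∈ M j) : F x = 0 := by
  obtain ⟨y, hy, hprim⟩ := exists_pow_succ_apply_sub_eq_zero hNM hbij.1 hx
  have hNy : N y ∈ M j := by
    convert hNM _ (Submodule.mem_map_of_mem hy) using 2
    push_cast
    ring
  have hFz : F (x - N y) = 0 :=
    apply_eq_zero_of_pow_succ_apply_eq_zero hFN hFM hbij.2 (sub_mem hx hNy) hprim
  have hFNy : F (N y) = 0 := by
    rw [← Module.End.mul_apply, hFN.eq, Module.End.mul_apply, hnext y hy, map_zero]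
  rw [← sub_add_cancel x (N y), map_add, hFz, hFNy, add_zero]

lemma apply_eq_zero_of_mem_nonneg (hNM : ∀ i : ℤ, (M i).map N ≤ M (i - 2))
    (hFN : Commute F N) (hFM : ∀ i : ℤ, (M i).map F ≤ M (i + 2)) {e : ℕ} (he : N ^ e = 0)
    (hbij : ∀ j : ℕ, Submodule.map (N ^ j) (M (j : ℤ)) = M (-(j : ℤ)) ∧
      ∀ x ∈ M (j : ℤ), (N ^ j) x = 0 → x = 0)
    (j : ℕ) {x : V} (hx : x ∈ M j) : F x = 0 := by
  refine Nat.forall_of_forall_ge_of_imp_add_two (e := e) (P := fun j => ∀ x ∈ M j, F x = 0)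
    (fun j hj x hx => ?_) (fun j hnext x hx => ?_) j x hx
  · rw [Submodule.eq_bot_of_pow_eq_zero_of_le (hbij j).2 he hj] at hx
    rw [(Submodule.mem_bot R).1 hx, map_zero]
  · exact apply_eq_zero_of_forall_mem_add_two hNM hFN hFM (hbij (j + 2)) hnext hx

end LefschetzGrading

open LefschetzGrading in
theorem commuting_raising_operator_is_zero_general
    (k : Type*) [Field k] (V : Type*) [AddCommGroup V] [Module k V]
    (M : ℤ → Submodule k V) (hdirect : DirectSum.IsInternal M)
    (N : V →ₗ[k] V) (hnil : IsNilpotent N)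
    (hNM : ∀ i : ℤ, (M i).map N ≤ M (i - 2))
    (hbij : ∀ j : ℕ, Submodule.map (N ^ j) (M (j : ℤ)) = M (-(j : ℤ)) ∧
      ∀ x ∈ M (j : ℤ), (N ^ j) x = 0 → x = 0)
    (F : V →ₗ[k] V) (hFN : F ∘ₗ N = N ∘ₗ F)
    (hFM : ∀ i : ℤ, (M i).map F ≤ M (i + 2)) :
    F = 0 := by
  obtain ⟨e, he⟩ := hnil
  have hFN : Commute F N := hFN
  have hpos := apply_eq_zero_of_mem_nonneg hNM hFN hFM he hbij
  have hM : ∀ i, M i ≤ LinearMap.ker F := by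
    intro i x hx
    obtain ⟨j, rfl | rfl⟩ := Int.eq_nat_or_neg i
    · exact hpos j hx
    · rw [← (hbij j).1] at hx
      obtain ⟨y, hy, rfl⟩ := hx
      rw [LinearMap.mem_ker, ← Module.End.mul_apply, (hFN.pow_right j).eq,
        Module.End.mul_apply, hpos j hy, map_zero]
  rw [← LinearMap.ker_eq_top, eq_top_iff, ← hdirect.submodule_iSup_eq_top]
  exact iSup_le hM

/-- Let `k` be a field, `V` a finite-dimensional `k`-vector space with a grading
`V = ⊕_{i∈ℤ} M_i` and a nilpotent endomorphism `N` with `N(M_i) ⊆ M_{i-2}` such that for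
each `j ≥ 0`, `N^j : M_j → M_{-j}` is an isomorphism. Then any linear map `F : V → V` that
commutes with `N` and satisfies `F(M_i) ⊆ M_{i+2}` for all `i` is zero. -/
theorem commuting_raising_operator_is_zero
    (k : Type*) [Field k] (V : Type*) [AddCommGroup V] [Module k V] [FiniteDimensional k V]
    (M : ℤ → Submodule k V) (hdirect : DirectSum.IsInternal M)
    (N : V →ₗ[k] V) (hnil : IsNilpotent N)
    (hNM : ∀ i : ℤ, (M i).map N ≤ M (i - 2))
    (hbij : ∀ j : ℕ, Submodule.map (N ^ j) (M (j : ℤ)) = M (-(j : ℤ)) ∧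
      ∀ x ∈ M (j : ℤ), (N ^ j) x = 0 → x = 0)
    (F : V →ₗ[k] V) (hFN : F ∘ₗ N = N ∘ₗ F)
    (hFM : ∀ i : ℤ, (M i).map F ≤ M (i + 2)) :
    F = 0 :=
  commuting_raising_operator_is_zero_general k V M hdirect N hnil hNM hbij F hFN hFM
end

section
/- Let R be a complete Noetherian local ring with maximal ideal 𝔪 that is an O-algebra over a complete DVR O, and suppose R is a finite O-algebra of Krull dimension at least 1 which is also O-flat (or: R has dim R ≥ 1 and is a finite O-module). Then there exists an O-algebra homomorphism R → O̅ into an algebraic closure of Frac(O); equivalently, R has a prime ideal with residue field of characteristic zero. -/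
/-!
Since `dim R ≥ 1`, `R` has a prime `p` that is not maximal. As `R` is integral over `O`, a prime
of `R` lying over a maximal ideal of `O` is itself maximal; so `p ∩ O` is a non-maximal prime of
the one-dimensional domain `O`, i.e. `p ∩ O = 0`. Then `R ⧸ p` is a domain, integral over the
subring `O`, hence embeds over `O` into an algebraic closure of `Frac O`.
-/

theorem Ring.exists_isPrime_not_isMaximal_of_one_le_ringKrullDim {R : Type*} [CommRing R]
    (h : 1 ≤ ringKrullDim R) : ∃ p : Ideal R, p.IsPrime ∧ ¬ p.IsMaximal := by
  by_contra! hmax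
  have : ringKrullDim R ≤ 0 := Ring.krullDimLE_iff.1 (Ring.krullDimLE_zero_iff.2 hmax)
  exact absurd (h.trans this) (by norm_num)

theorem Ideal.comap_eq_bot_of_isIntegral_of_not_isMaximal {O S : Type*} [CommRing O]
    [Ring.DimensionLEOne O] [CommRing S] [Algebra O S] [Algebra.IsIntegral O S]
    (p : Ideal S) [p.IsPrime] (hp : ¬ p.IsMaximal) : p.comap (algebraMap O S) = ⊥ := by
  by_contra h
  exact hp (Ideal.isMaximal_of_isIntegral_of_isMaximal_comap p
    ((Ideal.comap_isPrime (algebraMap O S) p).isMaximal h))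

theorem nonempty_algHom_algebraicClosure_of_comap_eq_bot {O S : Type*} [CommRing O] [IsDomain O]
    [CommRing S] [Algebra O S] [Algebra.IsIntegral O S] (p : Ideal S) [p.IsPrime]
    (hp : p.comap (algebraMap O S) = ⊥) :
    Nonempty (S →ₐ[O] AlgebraicClosure (FractionRing O)) := by
  have : Module.IsTorsionFree O (S ⧸ p) := by
    rw [Module.isTorsionFree_iff_algebraMap_injective, RingHom.injective_iff_ker_eq_bot,
      IsScalarTower.algebraMap_eq O S (S ⧸ p), ← RingHom.comap_ker,
      Ideal.Quotient.algebraMap_eq, Ideal.mk_ker, hp]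
  have : Module.IsTorsionFree O (AlgebraicClosure (FractionRing O)) :=
    .trans_faithfulSMul O (FractionRing O) _
  exact ⟨IsAlgClosed.lift.comp (Ideal.Quotient.mkₐ O p)⟩

theorem exists_char_zero_point_of_finite_flat_dim_ge_one_general
    (O : Type) [CommRing O] [IsDomain O] [IsDiscreteValuationRing O]
    (R : Type) [CommRing R] [Algebra O R] [Module.Finite O R]
    (hdim : 1 ≤ ringKrullDim R) :
    ∃ f : R →+* AlgebraicClosure (FractionRing O),
      ∀ a : O, f (algebraMap O R a) =
        algebraMap (FractionRing O) (AlgebraicClosure (FractionRing O))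
          (algebraMap O (FractionRing O) a) := by
  obtain ⟨p, hprime, hmax⟩ := Ring.exists_isPrime_not_isMaximal_of_one_le_ringKrullDim hdim
  obtain ⟨f⟩ := nonempty_algHom_algebraicClosure_of_comap_eq_bot p
    (Ideal.comap_eq_bot_of_isIntegral_of_not_isMaximal (O := O) p hmax)
  exact ⟨f, fun a => by rw [AlgHom.coe_toRingHom, f.commutes, ← IsScalarTower.algebraMap_apply]⟩

/-- Let `O` be a complete DVR whose fraction field has characteristic zero (e.g. `ℤ_ℓ`),
and let `R` be a complete Noetherian local `O`-algebra which is finite as an `O`-module and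
has Krull dimension at least `1`. Then there exists an `O`-algebra homomorphism
`R → O̅` into an algebraic closure of `Frac(O)`; equivalently, `R` has a point in
characteristic zero. -/
theorem exists_char_zero_point_of_finite_flat_dim_ge_one
    (O : Type) [CommRing O] [IsDomain O] [IsDiscreteValuationRing O]
    [IsAdicComplete (IsLocalRing.maximalIdeal O) O]
    [CharZero (FractionRing O)]
    (R : Type) [CommRing R] [IsLocalRing R] [IsNoetherianRing R]
    [IsAdicComplete (IsLocalRing.maximalIdeal R) R]
    [Algebra O R] [Module.Finite O R]
    (hdim : 1 ≤ ringKrullDim R) :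
    ∃ f : R →+* AlgebraicClosure (FractionRing O),
      ∀ a : O, f (algebraMap O R a) =
        algebraMap (FractionRing O) (AlgebraicClosure (FractionRing O))
          (algebraMap O (FractionRing O) a) :=
  exists_char_zero_point_of_finite_flat_dim_ge_one_general O R hdim
end
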